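/- arXiv:2005.04499 — 2 statements merged into one kernel-verified Lean document; each statement's English description precedes it below -/
import Mathlib

section
/- Let λ > 0, w₀ > 0, d > 0 and θ, θ̂ ∈ [0, π/2). If ŵ₀ > 0 satisfies w(d, ŵ₀) = (cos θ̂/cos θ)·w(d, w₀), then for every y ∈ ℝ one has cos θ̂ · I_G(y·cos θ̂; d, ŵ₀) = cos θ · I_G(y·cos θ; d, w₀). That is, a new source at the same distance d whose beam hits the surface with an arbitrary incidence angle θ̂ and whose waist radius is ŵ₀ creates exactly the same power density distribution across the surface as the original source with incidence angle θ and waist radius w₀. -/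
/-!
Tilting the surface by θ stretches the beam's footprint: `cos θ · I_G(y cos θ)` is again a
Gaussian profile in `y`, of width `w(d, w₀) / cos θ`. The hypothesis on `ŵ₀` says exactly that
the two sources produce the same such width, hence the same density.
-/

open Real

/-- Beamwidth of a Gaussian beam with wavelength `lam` and waist radius `w0`
at propagation distance `z`: `w(z, w₀) = w₀ √(1 + (λ z/(π w₀²))²)`. -/
noncomputable def beamWidth (lam w0 z : ℝ) : ℝ :=
  w0 * Real.sqrt (1 + (lam * z / (π * w0 ^ 2)) ^ 2)

/-- 2D orthogonal Gaussian power density at radial distance `a`, propagation distance `z`. -/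
noncomputable def IG (lam a z w0 : ℝ) : ℝ :=
  (Real.sqrt 2 / (Real.sqrt π * beamWidth lam w0 z)) *
    Real.exp (-2 * a ^ 2 / (beamWidth lam w0 z) ^ 2)

noncomputable def gaussianProfile (w a : ℝ) : ℝ :=
  √2 / (√π * w) * exp (-2 * a ^ 2 / w ^ 2)

theorem IG_eq_gaussianProfile (lam a z w0 : ℝ) :
    IG lam a z w0 = gaussianProfile (beamWidth lam w0 z) a := rfl

-- Holds for `c = 0` too, since then both sides are `0` by the junk value `w / 0 = 0`.
theorem mul_gaussianProfile_mul (c w y : ℝ) :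
    c * gaussianProfile w (y * c) = gaussianProfile (w / c) y := by
  simp only [gaussianProfile, div_eq_mul_inv, mul_inv, mul_pow, inv_pow, inv_inv]
  ring_nf

theorem beamWidth_ne_zero {lam w0 : ℝ} (z : ℝ) (hw0 : w0 ≠ 0) : beamWidth lam w0 z ≠ 0 :=
  mul_ne_zero hw0 (Real.sqrt_pos.2 (by positivity)).ne'

theorem div_eq_div_of_eq_div_mul {a b c d : ℝ} (ha : a ≠ 0) (h : a = c / d * b) :
    a / c = b / d := by
  have hc : c ≠ 0 := by rintro rfl; simp_all
  have hd : d ≠ 0 := by rintro rfl; simp_all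
  rw [h]
  field_simp

theorem equivalent_source_same_density_general (lam w0 d θ θh hw0' : ℝ)
    (hw0'pos : 0 < hw0')
    (hEq : beamWidth lam hw0' d = (Real.cos θh / Real.cos θ) * beamWidth lam w0 d) :
    ∀ y : ℝ,
      Real.cos θh * IG lam (y * Real.cos θh) d hw0' =
        Real.cos θ * IG lam (y * Real.cos θ) d w0 := by
  intro y
  have hwidth : beamWidth lam hw0' d / cos θh = beamWidth lam w0 d / cos θ :=
    div_eq_div_of_eq_div_mul (beamWidth_ne_zero d hw0'pos.ne') hEq
  simp only [IG_eq_gaussianProfile, mul_gaussianProfile_mul, hwidth]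

/-- Corollary 1: a new source at the same distance `d`, incidence angle θ̂ and waist radius ŵ₀
with `w(d, ŵ₀) = (cos θ̂ / cos θ) w(d, w₀)` creates the same power density distribution across
the surface as the original source with incidence angle θ and waist radius w₀. -/
theorem equivalent_source_same_density (lam w0 d θ θh hw0' : ℝ)
    (hlam : 0 < lam) (hw0 : 0 < w0) (hd : 0 < d)
    (hθ : θ ∈ Set.Ico 0 (π / 2)) (hθh : θh ∈ Set.Ico 0 (π / 2)) (hw0'pos : 0 < hw0')
    (hEq : beamWidth lam hw0' d = (Real.cos θh / Real.cos θ) * beamWidth lam w0 d) :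
    ∀ y : ℝ,
      Real.cos θh * IG lam (y * Real.cos θh) d hw0' =
        Real.cos θ * IG lam (y * Real.cos θ) d w0 :=
  equivalent_source_same_density_general lam w0 d θ θh hw0' hw0'pos hEq
end

section
/- Let σ_t > 0, A₀ > 0, t > 0, let U be a real random variable with law N(0, σ_t²), and define h_g := A₀·exp(−2U²/t). Set ϱ := t/(4σ_t²). Then the law of h_g is absolutely continuous with respect to Lebesgue measure with density f(x) = (√ϱ/(√π·A₀)) · (x/A₀)^{ϱ−1} · (ln(A₀/x))^{−1/2} for 0 < x ≤ A₀, and f(x) = 0 otherwise. -/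
/-!
`h_g = g(U)` with `g(u) = A₀ exp(-2u²/t)` even, and `g` maps `(0, ∞)` decreasingly and
bijectively onto `(0, A₀)`. Folding the Gaussian density `φ` onto `(0, ∞)` doubles it, and
the change of variables `y = g(u)` turns `2 φ(u) du` into `f(y) dy` because
`|g'(u)| f(g(u)) = 2 φ(u)`: since `log (A₀ / g(u)) = 2u²/t` and
`(g(u)/A₀)^ϱ = exp(-u²/(2σ_t²))`, this is an algebraic identity.
-/

open Real MeasureTheory ProbabilityTheory Set
open scoped ENNReal NNReal

theorem lintegral_eq_two_mul_setLIntegral_Ioi_of_even {μ : Measure ℝ} [μ.IsNegInvariant]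
    [NullSingletonClass μ] {f : ℝ → ℝ≥0∞} (hf : ∀ x, f (-x) = f x) :
    ∫⁻ x, f x ∂μ = 2 * ∫⁻ x in Ioi 0, f x ∂μ := by
  have hIio : ∫⁻ x in Iio 0, f x ∂μ = ∫⁻ x in Ioi 0, f x ∂μ := by
    simpa [hf] using (Measure.measurePreserving_neg μ).setLIntegral_comp_preimage_emb
      measurableEmbedding_neg f (Ioi 0)
  rw [← lintegral_add_compl f measurableSet_Ioi, compl_Ioi, ← setLIntegral_congr Iio_ae_eq_Iic,
    hIio, two_mul]

theorem map_withDensity_eq_withDensity_of_even {ρ f : ℝ → ℝ≥0∞} {g g' : ℝ → ℝ}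
    (hρ : Measurable ρ) (hρ_even : ∀ x, ρ (-x) = ρ x) (hf : Measurable f)
    (hg : Measurable g) (hg_even : ∀ x, g (-x) = g x)
    (hg' : ∀ x ∈ Ioi 0, HasDerivWithinAt g (g' x) (Ioi 0) x) (hg_inj : InjOn g (Ioi 0))
    (hf_zero : ∀ y ∉ g '' Ioi 0, f y = 0)
    (hρf : ∀ x ∈ Ioi 0, 2 * ρ x = ENNReal.ofReal |g' x| * f (g x)) :
    (volume.withDensity ρ).map g = volume.withDensity f := by
  refine Measure.ext_of_lintegral _ fun φ hφ => ?_
  calc ∫⁻ y, φ y ∂(volume.withDensity ρ).map g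
      = ∫⁻ x, ρ x * φ (g x) := by
        rw [lintegral_map hφ hg]
        exact lintegral_withDensity_eq_lintegral_mul _ hρ (hφ.comp hg)
    _ = ∫⁻ x in Ioi 0, 2 * ρ x * φ (g x) := by
        rw [lintegral_eq_two_mul_setLIntegral_Ioi_of_even (by simp [hρ_even, hg_even]),
          ← lintegral_const_mul' _ _ (by norm_num)]
        simp only [mul_assoc]
    _ = ∫⁻ x in Ioi 0, ENNReal.ofReal |g' x| * (f (g x) * φ (g x)) := by
        refine setLIntegral_congr_fun measurableSet_Ioi fun x hx => ?_
        rw [hρf x hx, mul_assoc]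
    _ = ∫⁻ y in g '' Ioi 0, f y * φ y :=
        (lintegral_image_eq_lintegral_abs_deriv_mul measurableSet_Ioi hg' hg_inj
          (fun y => f y * φ y)).symm
    _ = ∫⁻ y, φ y ∂volume.withDensity f := by
        rw [setLIntegral_eq_of_support_subset, lintegral_withDensity_eq_lintegral_mul _ hf hφ]
        · rfl
        · intro y hy
          by_contra hy'
          simp [hf_zero y hy'] at hy

theorem gaussianPDF_neg (v : ℝ≥0) (x : ℝ) : gaussianPDF 0 v (-x) = gaussianPDF 0 v x := by
  simp [gaussianPDF, gaussianPDFReal]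

noncomputable def gml (A₀ t u : ℝ) : ℝ := A₀ * exp (-2 * u ^ 2 / t)

noncomputable def gmlPDF (A₀ ϱ x : ℝ) : ℝ :=
  if 0 < x ∧ x ≤ A₀ then
    √ϱ / (√π * A₀) * (x / A₀) ^ (ϱ - 1) * log (A₀ / x) ^ (-(1:ℝ) / 2)
  else 0

section gml

variable {A₀ t : ℝ}

theorem gml_neg (u : ℝ) : gml A₀ t (-u) = gml A₀ t u := by
  simp [gml]

theorem hasDerivAt_gml (u : ℝ) : HasDerivAt (gml A₀ t) (-(4 * u / t) * gml A₀ t u) u := by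
  have h := (((hasDerivAt_pow 2 u).const_mul (-2 : ℝ)).div_const t).exp.const_mul A₀
  exact h.congr_deriv (by rw [gml]; push_cast; ring)

theorem gml_pos (hA₀ : 0 < A₀) (u : ℝ) : 0 < gml A₀ t u := by
  unfold gml; positivity

theorem strictAntiOn_gml (hA₀ : 0 < A₀) (ht : 0 < t) : StrictAntiOn (gml A₀ t) (Ici 0) := by
  intro a ha b hb hab
  rw [mem_Ici] at ha hb
  refine mul_lt_mul_of_pos_left (exp_lt_exp.mpr ?_) hA₀
  exact div_lt_div_of_pos_right (by nlinarith) ht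

theorem gml_lt_of_pos (hA₀ : 0 < A₀) (ht : 0 < t) {u : ℝ} (hu : 0 < u) :
    gml A₀ t u < A₀ := by
  simpa [gml] using strictAntiOn_gml hA₀ ht self_mem_Ici hu.le hu

theorem gml_sqrt_log (hA₀ : 0 < A₀) (ht : 0 < t) {y : ℝ} (hy : 0 < y) (hyA : y ≤ A₀) :
    gml A₀ t √(t / 2 * log (A₀ / y)) = y := by
  have hlog : 0 ≤ log (A₀ / y) := log_nonneg ((le_div_iff₀ hy).mpr (by linarith))
  rw [gml, sq_sqrt (by positivity), show -2 * (t / 2 * log (A₀ / y)) / t = log (y / A₀) by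
    rw [← inv_div A₀ y, log_inv]; field_simp, exp_log (by positivity)]
  field_simp

theorem image_gml_Ioi (hA₀ : 0 < A₀) (ht : 0 < t) : gml A₀ t '' Ioi 0 = Ioo 0 A₀ := by
  ext y
  constructor
  · rintro ⟨u, hu : 0 < u, rfl⟩
    exact ⟨gml_pos hA₀ u, gml_lt_of_pos hA₀ ht hu⟩
  · rintro ⟨hy, hyA⟩
    refine ⟨√(t / 2 * log (A₀ / y)), ?_, gml_sqrt_log hA₀ ht hy hyA.le⟩
    have : 0 < log (A₀ / y) := log_pos ((one_lt_div hy).mpr hyA)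
    exact sqrt_pos.mpr (by positivity)

theorem gml_div_self (hA₀ : A₀ ≠ 0) (u : ℝ) :
    gml A₀ t u / A₀ = exp (-2 * u ^ 2 / t) := by
  rw [gml]; field_simp

theorem log_div_gml (hA₀ : A₀ ≠ 0) (u : ℝ) : log (A₀ / gml A₀ t u) = 2 * u ^ 2 / t := by
  rw [← inv_div, gml_div_self hA₀, log_inv, log_exp]; ring

theorem abs_deriv_mul_gmlPDF_gml {σ u : ℝ} (hσ : 0 < σ) (hA₀ : 0 < A₀) (ht : 0 < t)
    (hu : 0 < u) :
    |-(4 * u / t) * gml A₀ t u| * gmlPDF A₀ (t / (4 * σ ^ 2)) (gml A₀ t u)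
      = 2 * gaussianPDFReal 0 (σ ^ 2).toNNReal u := by
  have hg := gml_pos (t := t) hA₀ u
  have h_abs : |-(4 * u / t) * gml A₀ t u| = 4 * u / t * gml A₀ t u := by
    rw [neg_mul, abs_neg, abs_of_pos (by positivity)]
  have h_rpow : (2 * u ^ 2 / t) ^ (-(1:ℝ) / 2) = √t / (√2 * u) := by
    rw [show -(1:ℝ) / 2 = -(1 / 2) by norm_num, rpow_neg (by positivity), ← sqrt_eq_rpow,
      sqrt_div' _ ht.le, sqrt_mul' _ (sq_nonneg u), sqrt_sq hu.le, inv_div]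
  have h_sqrt_ϱ : √(t / (4 * σ ^ 2)) = √t / (2 * σ) := by
    rw [sqrt_div' _ (by positivity), sqrt_mul' _ (sq_nonneg σ), sqrt_sq hσ.le,
      show (4 : ℝ) = 2 ^ 2 by norm_num, sqrt_sq zero_le_two]
  have h_sqrt_var : √(2 * π * σ ^ 2) = √2 * √π * σ := by
    rw [sqrt_mul' _ (sq_nonneg σ), sqrt_sq hσ.le, sqrt_mul zero_le_two]
  have h_exp : exp (-2 * u ^ 2 / t) * exp (-2 * u ^ 2 / t) ^ (t / (4 * σ ^ 2) - 1)
      = exp (-(u - 0) ^ 2 / (2 * σ ^ 2)) := by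
    rw [← exp_mul, ← exp_add]
    congr 1
    field_simp
    ring
  rw [gmlPDF, if_pos ⟨hg, (gml_lt_of_pos hA₀ ht hu).le⟩, h_abs, gml_div_self hA₀.ne',
    log_div_gml hA₀.ne', h_rpow, h_sqrt_ϱ, gaussianPDFReal, Real.coe_toNNReal _ (sq_nonneg σ),
    h_sqrt_var, ← h_exp]
  unfold gml
  field_simp
  rw [sq_sqrt ht.le]
  ring

/-- At `x = A₀` the factor `log (A₀ / x) ^ (-1/2)` is `0 ^ (-1/2)`, which `Real.rpow` sets
to `0`. -/
theorem gmlPDF_eq_zero_of_notMem_Ioo {ϱ x : ℝ} (hx : x ∉ Ioo 0 A₀) :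
    gmlPDF A₀ ϱ x = 0 := by
  rw [gmlPDF]
  split_ifs with h
  · obtain rfl : x = A₀ := le_antisymm h.2 (not_lt.mp fun hlt => hx ⟨h.1, hlt⟩)
    simp [div_self h.1.ne']
  · rfl

theorem measurable_gmlPDF (ϱ : ℝ) : Measurable (gmlPDF A₀ ϱ) :=
  Measurable.ite measurableSet_Ioc (by fun_prop) measurable_const

end gml

theorem GML_pdf_scalar_misalignment_general {α : Type*} [MeasurableSpace α]
    (P : Measure α)
    (σt A₀ t : ℝ) (hσt : 0 < σt) (hA₀ : 0 < A₀) (ht : 0 < t)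
    (U : α → ℝ) (hU : Measurable U)
    (hlaw : Measure.map U P = gaussianReal 0 (σt ^ 2).toNNReal)
    (ϱ : ℝ) (hϱ : ϱ = t / (4 * σt ^ 2)) :
    Measure.map (fun ω => A₀ * Real.exp (-2 * (U ω) ^ 2 / t)) P
      = volume.withDensity (fun x => ENNReal.ofReal (
          if 0 < x ∧ x ≤ A₀ then
            (Real.sqrt ϱ / (Real.sqrt π * A₀)) * (x / A₀) ^ (ϱ - 1)
              * (Real.log (A₀ / x)) ^ (-(1:ℝ) / 2)
          else 0)) := by
  subst hϱ
  have hv : (σt ^ 2).toNNReal ≠ 0 := by simpa using hσt.ne'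
  have hg : Measurable (gml A₀ t) := by unfold gml; fun_prop
  calc Measure.map (gml A₀ t ∘ U) P = (gaussianReal 0 (σt ^ 2).toNNReal).map (gml A₀ t) := by
        rw [← hlaw, Measure.map_map hg hU]
    _ = volume.withDensity fun x => ENNReal.ofReal (gmlPDF A₀ (t / (4 * σt ^ 2)) x) := by
        rw [gaussianReal_of_var_ne_zero 0 hv]
        refine map_withDensity_eq_withDensity_of_even (measurable_gaussianPDF 0 _)
          (gaussianPDF_neg _) (measurable_gmlPDF _).ennreal_ofReal hg gml_neg
          (fun u _ => (hasDerivAt_gml u).hasDerivWithinAt)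
          ((strictAntiOn_gml hA₀ ht).injOn.mono Ioi_subset_Ici_self) (fun y hy => ?_)
          (fun u hu => ?_)
        · rw [image_gml_Ioi hA₀ ht] at hy
          rw [gmlPDF_eq_zero_of_notMem_Ioo hy, ENNReal.ofReal_zero]
        · rw [← ENNReal.ofReal_mul (abs_nonneg _), abs_deriv_mul_gmlPDF_gml hσt hA₀ ht hu,
            ENNReal.ofReal_mul zero_le_two, ENNReal.ofReal_ofNat]
          rfl

/-- Eq. (35): the PDF of the GML `h_g = A₀ exp(−2U²/t)` for a scalar Gaussian misalignment
`U ~ N(0, σ_t²)`:  with `ϱ = t/(4σ_t²)`, the density is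
`(√ϱ/(√π A₀)) (x/A₀)^{ϱ−1} (ln(A₀/x))^{−1/2}` on `(0, A₀]` and 0 otherwise. -/
theorem GML_pdf_scalar_misalignment {α : Type*} [MeasurableSpace α]
    (P : Measure α) [IsProbabilityMeasure P]
    (σt A₀ t : ℝ) (hσt : 0 < σt) (hA₀ : 0 < A₀) (ht : 0 < t)
    (U : α → ℝ) (hU : Measurable U)
    (hlaw : Measure.map U P = gaussianReal 0 (σt ^ 2).toNNReal)
    (ϱ : ℝ) (hϱ : ϱ = t / (4 * σt ^ 2)) :
    Measure.map (fun ω => A₀ * Real.exp (-2 * (U ω) ^ 2 / t)) P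
      = volume.withDensity (fun x => ENNReal.ofReal (
          if 0 < x ∧ x ≤ A₀ then
            (Real.sqrt ϱ / (Real.sqrt π * A₀)) * (x / A₀) ^ (ϱ - 1)
              * (Real.log (A₀ / x)) ^ (-(1:ℝ) / 2)
          else 0)) :=
  GML_pdf_scalar_misalignment_general P σt A₀ t hσt hA₀ ht U hU hlaw ϱ hϱ
end
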